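/- arXiv:2412.00358 — 10 statements merged into one kernel-verified Lean document; each statement's English description precedes it below -/
import Mathlib

section
/- Every budget-additive valuation function is restricted MMS-feasible: if v(S) = min(Σ_{g∈S} v(g), B) for some budget B > 0 and nonnegative item values, then for any bundle S, any k, and any two partitions (X_1,...,X_k) and (Z_1,...,Z_k) of S, max_ℓ v(X_ℓ) ≥ min_j v(Z_j). -/
/-!
Both partitions split the same total weight `∑ g ∈ S, w g` into `k` parts, so some index `ℓ`
has `∑ g ∈ Z ℓ, w g ≤ ∑ g ∈ X ℓ, w g`. Capping at `B` is monotone, hence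
`min_j v (Z j) ≤ v (Z ℓ) ≤ v (X ℓ) ≤ max_j v (X j)`.
-/

open Finset

/-- `X` is a partition of the bundle `S` into `k` bundles (bundles may be empty). -/
def IsPartitionOn {G : Type*} [DecidableEq G] {k : ℕ} (S : Finset G)
    (X : Fin k → Finset G) : Prop :=
  (∀ i j : Fin k, i ≠ j → Disjoint (X i) (X j)) ∧ Finset.univ.biUnion X = S

namespace IsPartitionOn

variable {G M : Type*} [DecidableEq G] {k : ℕ} {S : Finset G} {X Z : Fin k → Finset G}

theorem sum_sum_eq [AddCommMonoid M] (hX : IsPartitionOn S X) (w : G → M) :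
    ∑ ℓ, ∑ g ∈ X ℓ, w g = ∑ g ∈ S, w g := by
  rw [← hX.2, sum_biUnion fun i _ j _ hij => hX.1 i j hij]

theorem exists_sum_le [AddCommMonoid M] [LinearOrder M] [IsOrderedCancelAddMonoid M]
    (hk : 0 < k) (hX : IsPartitionOn S X) (hZ : IsPartitionOn S Z) (w : G → M) :
    ∃ ℓ, ∑ g ∈ Z ℓ, w g ≤ ∑ g ∈ X ℓ, w g := by
  have htotal := (hZ.sum_sum_eq w).trans (hX.sum_sum_eq w).symm
  obtain ⟨ℓ, -, hℓ⟩ := exists_le_of_sum_le ⟨⟨0, hk⟩, mem_univ _⟩ htotal.le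
  exact ⟨ℓ, hℓ⟩

end IsPartitionOn

theorem budget_additive_is_restricted_MMS_feasible_general
    {G : Type*} [DecidableEq G] (w : G → ℝ)
    (B : ℝ)
    (v : Finset G → ℝ) (hv : ∀ S : Finset G, v S = min (∑ g ∈ S, w g) B)
    (S : Finset G) (k : ℕ) (hk : 0 < k)
    (X Z : Fin k → Finset G)
    (hX : IsPartitionOn S X) (hZ : IsPartitionOn S Z) :
    Finset.univ.inf' ⟨⟨0, hk⟩, mem_univ _⟩ (fun ℓ => v (Z ℓ)) ≤
      Finset.univ.sup' ⟨⟨0, hk⟩, mem_univ _⟩ (fun ℓ => v (X ℓ)) := by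
  obtain ⟨ℓ, hℓ⟩ := hX.exists_sum_le hk hZ w
  calc univ.inf' _ (fun ℓ => v (Z ℓ)) ≤ v (Z ℓ) := inf'_le _ (mem_univ ℓ)
    _ ≤ v (X ℓ) := by rw [hv, hv]; exact min_le_min_right B hℓ
    _ ≤ univ.sup' _ (fun ℓ => v (X ℓ)) := le_sup' (fun ℓ => v (X ℓ)) (mem_univ ℓ)

theorem budget_additive_is_restricted_MMS_feasible
    {G : Type*} [DecidableEq G] (w : G → ℝ) (hw : ∀ g, 0 ≤ w g)
    (B : ℝ) (hB : 0 < B)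
    (v : Finset G → ℝ) (hv : ∀ S : Finset G, v S = min (∑ g ∈ S, w g) B)
    (S : Finset G) (k : ℕ) (hk : 0 < k)
    (X Z : Fin k → Finset G)
    (hX : IsPartitionOn S X) (hZ : IsPartitionOn S Z) :
    Finset.univ.inf' ⟨⟨0, hk⟩, mem_univ _⟩ (fun ℓ => v (Z ℓ)) ≤
      Finset.univ.sup' ⟨⟨0, hk⟩, mem_univ _⟩ (fun ℓ => v (X ℓ)) :=
  budget_additive_is_restricted_MMS_feasible_general w B v hv S k hk X Z hX hZ
end

section
/- Every good-cancelable valuation function is restricted MMS-feasible: if v satisfies the cancelation property (v(Q) ≥ v(R) and v(S) > v(T) with Q∩S = R∩T = ∅ imply v(Q∪S) > v(R∪T)), then for any bundle S, any k, and any two partitions (X_1,...,X_k), (Y_1,...,Y_k) of S, max_ℓ v(X_ℓ) ≥ min_ℓ v(Y_ℓ). -/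
open Finset

/-!
If every bundle of the partition `X` were worth strictly less than every bundle of `Y`, then in
particular `v (X i) < v (Y i)` for each `i`; adding the bundles one at a time, cancelation keeps
the strict inequality for the unions, and ends at `v S < v S`.
-/

def GoodCancelable {G α : Type*} [DecidableEq G] [Preorder α] (v : Finset G → α) : Prop :=
  ∀ Q R S T : Finset G, Disjoint Q S → Disjoint R T → v R ≤ v Q → v T < v S →
    v (R ∪ T) < v (Q ∪ S)

namespace GoodCancelable

variable {G α ι : Type*} [DecidableEq G] [DecidableEq ι] {v : Finset G → α}

theorem biUnion_lt_biUnion [Preorder α] (hv : GoodCancelable v) {s : Finset ι}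
    (hs : s.Nonempty) {X Y : ι → Finset G} (hX : (s : Set ι).PairwiseDisjoint X)
    (hY : (s : Set ι).PairwiseDisjoint Y) (hXY : ∀ i ∈ s, v (X i) < v (Y i)) :
    v (s.biUnion X) < v (s.biUnion Y) := by
  induction hs using Finset.Nonempty.cons_induction with
  | singleton a => simpa using hXY a (mem_singleton_self a)
  | cons a s ha _ ih =>
    simp only [coe_cons, Set.pairwiseDisjoint_insert, mem_coe] at hX hY
    have hdisj {Z : ι → Finset G} (hZ : ∀ j ∈ s, a ≠ j → Disjoint (Z a) (Z j)) :
        Disjoint (Z a) (s.biUnion Z) :=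
      (disjoint_biUnion_right _ _ _).2 fun j hj => hZ j hj (ne_of_mem_of_not_mem hj ha).symm
    rw [cons_eq_insert, biUnion_insert, biUnion_insert]
    exact hv _ _ _ _ (hdisj hY.2) (hdisj hX.2) (hXY a (mem_cons_self a s)).le
      (ih hX.1 hY.1 fun i hi => hXY i (mem_cons_of_mem hi))

theorem exists_le_of_isPartitionOn [LinearOrder α] (hv : GoodCancelable v) {k : ℕ}
    (hk : 0 < k) {S : Finset G} {X Y : Fin k → Finset G} (hX : IsPartitionOn S X)
    (hY : IsPartitionOn S Y) : ∃ i, v (Y i) ≤ v (X i) := by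
  by_contra! hXY
  have hS := hv.biUnion_lt_biUnion (s := univ) ⟨⟨0, hk⟩, mem_univ _⟩
    (fun i _ j _ hij => hX.1 i j hij) (fun i _ j _ hij => hY.1 i j hij) fun i _ => hXY i
  rw [hX.2, hY.2] at hS
  exact hS.false

end GoodCancelable

theorem good_cancelable_is_restricted_MMS_feasible_general
    {G : Type*} [DecidableEq G]
    (v : Finset G → ℝ)
    (hcancel : ∀ Q R S T : Finset G, Disjoint Q S → Disjoint R T →
      v R ≤ v Q → v T < v S → v (R ∪ T) < v (Q ∪ S))
    (S : Finset G) (k : ℕ) (hk : 0 < k)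
    (X Y : Fin k → Finset G)
    (hX : IsPartitionOn S X) (hY : IsPartitionOn S Y) :
    Finset.univ.inf' ⟨⟨0, hk⟩, mem_univ _⟩ (fun ℓ => v (Y ℓ)) ≤
      Finset.univ.sup' ⟨⟨0, hk⟩, mem_univ _⟩ (fun ℓ => v (X ℓ)) := by
  obtain ⟨i, hi⟩ := GoodCancelable.exists_le_of_isPartitionOn hcancel hk hX hY
  calc univ.inf' _ (fun ℓ => v (Y ℓ)) ≤ v (Y i) := inf'_le _ (mem_univ i)
    _ ≤ v (X i) := hi
    _ ≤ univ.sup' _ (fun ℓ => v (X ℓ)) := le_sup' (fun ℓ => v (X ℓ)) (mem_univ i)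

theorem good_cancelable_is_restricted_MMS_feasible
    {G : Type*} [DecidableEq G]
    (v : Finset G → ℝ) (hnn : ∀ S, 0 ≤ v S)
    (hcancel : ∀ Q R S T : Finset G, Disjoint Q S → Disjoint R T →
      v R ≤ v Q → v T < v S → v (R ∪ T) < v (Q ∪ S))
    (S : Finset G) (k : ℕ) (hk : 0 < k)
    (X Y : Fin k → Finset G)
    (hX : IsPartitionOn S X) (hY : IsPartitionOn S Y) :
    Finset.univ.inf' ⟨⟨0, hk⟩, mem_univ _⟩ (fun ℓ => v (Y ℓ)) ≤
      Finset.univ.sup' ⟨⟨0, hk⟩, mem_univ _⟩ (fun ℓ => v (X ℓ)) :=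
  good_cancelable_is_restricted_MMS_feasible_general v hcancel S k hk X Y hX hY
end

section
/- Every EFL allocation with additive valuations is 1/2-EFX: if allocation (X_1,...,X_n) is EFL, then for every pair of agents i, j and every good g ∈ X_j, v_i(X_i) ≥ (1/2)·v_i(X_j \ {g}). -/
open Finset

theorem Finset.sum_erase_le_sum_erase_add {G M : Type*} [DecidableEq G] [AddCommMonoid M]
    [PartialOrder M] [IsOrderedAddMonoid M] {w : G → M} (hw : ∀ g, 0 ≤ w g)
    {S : Finset G} (g : G) {g' : G} (hg' : g' ∈ S) :
    ∑ x ∈ S.erase g, w x ≤ ∑ x ∈ S.erase g', w x + w g' :=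
  calc ∑ x ∈ S.erase g, w x ≤ ∑ x ∈ S, w x :=
        sum_le_sum_of_subset_of_nonneg (erase_subset g S) fun x _ _ => hw x
    _ = ∑ x ∈ S.erase g', w x + w g' := (sum_erase_add S w hg').symm

theorem Finset.erase_eq_empty_of_card_le_one {G : Type*} [DecidableEq G] {S : Finset G} {g : G}
    (hS : #S ≤ 1) (hg : g ∈ S) : S.erase g = ∅ :=
  card_eq_zero.mp (by rw [card_erase_of_mem hg]; omega)

/-- `T` is the agent's own bundle and `S` the envied one; the EFL bounds on `g'` and on
`S.erase g'` add up to a bound on all of `S`. -/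
theorem sum_erase_le_two_mul_of_efl {G : Type*} [DecidableEq G] {w : G → ℝ} (hw : ∀ g, 0 ≤ w g)
    {S T : Finset G}
    (hEFL : #S ≤ 1 ∨ ∃ g' ∈ S, w g' ≤ ∑ x ∈ T, w x ∧ ∑ x ∈ S.erase g', w x ≤ ∑ x ∈ T, w x)
    {g : G} (hg : g ∈ S) :
    ∑ x ∈ S.erase g, w x ≤ 2 * ∑ x ∈ T, w x := by
  have hT : 0 ≤ ∑ x ∈ T, w x := sum_nonneg fun x _ => hw x
  rcases hEFL with hS | ⟨g', hg', hsingle, hrest⟩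
  · rw [erase_eq_empty_of_card_le_one hS hg, sum_empty]
    linarith
  · linarith [sum_erase_le_sum_erase_add hw g hg']

theorem EFL_implies_half_EFX_general
    {G : Type*} [DecidableEq G] {n : ℕ}
    (w : Fin n → G → ℝ) (hw : ∀ i g, 0 ≤ w i g)
    (V : Fin n → Finset G → ℝ) (hV : ∀ i S, V i S = ∑ g ∈ S, w i g)
    (X : Fin n → Finset G)
    (hEFL : ∀ i j : Fin n, (X j).card ≤ 1 ∨
      ∃ g ∈ X j, V i {g} ≤ V i (X i) ∧ V i ((X j).erase g) ≤ V i (X i)) :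
    ∀ i j : Fin n, ∀ g ∈ X j,
      (1 / 2 : ℝ) * V i ((X j).erase g) ≤ V i (X i) := by
  intro i j g hg
  simp only [hV, sum_singleton] at hEFL ⊢
  linarith [sum_erase_le_two_mul_of_efl (hw i) (hEFL i j) hg]

theorem EFL_implies_half_EFX
    {G : Type*} [DecidableEq G] {n : ℕ}
    (w : Fin n → G → ℝ) (hw : ∀ i g, 0 ≤ w i g)
    (V : Fin n → Finset G → ℝ) (hV : ∀ i S, V i S = ∑ g ∈ S, w i g)
    (X : Fin n → Finset G)
    (hdisj : ∀ i j : Fin n, i ≠ j → Disjoint (X i) (X j))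
    (hEFL : ∀ i j : Fin n, (X j).card ≤ 1 ∨
      ∃ g ∈ X j, V i {g} ≤ V i (X i) ∧ V i ((X j).erase g) ≤ V i (X i)) :
    ∀ i j : Fin n, ∀ g ∈ X j,
      (1 / 2 : ℝ) * V i ((X j).erase g) ≤ V i (X i) :=
  EFL_implies_half_EFX_general w hw V hV X hEFL
end

section
/- Every EFL allocation with additive valuations is 2/3-PMMS: if allocation (X_1,...,X_n) is EFL, then for every pair of agents i, j, v_i(X_i) ≥ (2/3)·μ_i(2, X_i ∪ X_j), where μ_i(2, S) is agent i's maximin share when partitioning S into 2 bundles. -/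
/-!
Let `S = X i ∪ X j`. If `X j` has at most one good, every split of `S` leaves one side inside
`X i`, so `μ_i(2, S) ≤ v_i(X i)`. Otherwise EFL gives a good `g` with `v_i({g})` and
`v_i(X j \ {g})` both at most `v_i(X i)`, so `v_i(S) ≤ 3 v_i(X i)`, while the smaller half of a
split is worth at most `v_i(S) / 2`.
-/

open Finset

/-- Agent `i`'s maximin share over two bundles obtained by splitting `S` in two:
the maximum over subsets `A ⊆ S` of the minimum of the values of `A` and `S \ A`. -/
noncomputable def mu2 {G : Type*} [DecidableEq G] (V : Finset G → ℝ) (S : Finset G) : ℝ :=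
  S.powerset.sup' (Finset.powerset_nonempty S) (fun A => min (V A) (V (S \ A)))

section

variable {G : Type*} [DecidableEq G]

theorem mu2_le_half_sum (w : G → ℝ) (S : Finset G) :
    mu2 (fun A => ∑ g ∈ A, w g) S ≤ (∑ g ∈ S, w g) / 2 := by
  refine sup'_le _ _ fun A hA => ?_
  have hsplit : ∑ g ∈ S \ A, w g + ∑ g ∈ A, w g = ∑ g ∈ S, w g := sum_sdiff (mem_powerset.mp hA)
  linarith [min_le_left (∑ g ∈ A, w g) (∑ g ∈ S \ A, w g),
    min_le_right (∑ g ∈ A, w g) (∑ g ∈ S \ A, w g)]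

theorem mu2_union_le_of_card_le_one {V : Finset G → ℝ} (hV : Monotone V) (T B : Finset G)
    (hB : #B ≤ 1) : mu2 V (T ∪ B) ≤ V T := by
  refine sup'_le _ _ fun A hA => ?_
  by_cases hBA : B ⊆ A
  · have hsub : (T ∪ B) \ A ⊆ T := by
      rw [union_sdiff_distrib, sdiff_eq_empty_iff_subset.mpr hBA, union_empty]
      exact sdiff_subset
    exact (min_le_right _ _).trans (hV hsub)
  · obtain ⟨b, hbB, hbA⟩ := not_subset.mp hBA
    have hsub : A ⊆ T := fun a ha => by
      rcases mem_union.mp (mem_powerset.mp hA ha) with haT | haB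
      · exact haT
      · exact absurd (card_le_one.mp hB a haB b hbB ▸ ha) hbA
    exact (min_le_left _ _).trans (hV hsub)

theorem sum_union_le_sum_add_sum {w : G → ℝ} (hw : ∀ g, 0 ≤ w g) (S T : Finset G) :
    ∑ g ∈ S ∪ T, w g ≤ ∑ g ∈ S, w g + ∑ g ∈ T, w g := by
  rw [← sum_union_inter]
  exact le_add_of_nonneg_right (sum_nonneg fun g _ => hw g)

end

theorem EFL_implies_two_thirds_PMMS_general
    {G : Type*} [DecidableEq G] {n : ℕ}
    (w : Fin n → G → ℝ) (hw : ∀ i g, 0 ≤ w i g)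
    (V : Fin n → Finset G → ℝ) (hV : ∀ i S, V i S = ∑ g ∈ S, w i g)
    (X : Fin n → Finset G)
    (hEFL : ∀ i j : Fin n, (X j).card ≤ 1 ∨
      ∃ g ∈ X j, V i {g} ≤ V i (X i) ∧ V i ((X j).erase g) ≤ V i (X i)) :
    ∀ i j : Fin n, (2 / 3 : ℝ) * mu2 (V i) (X i ∪ X j) ≤ V i (X i) := by
  intro i j
  obtain rfl : V = fun i S => ∑ g ∈ S, w i g := funext₂ hV
  beta_reduce at hEFL ⊢
  have hXi : 0 ≤ ∑ g ∈ X i, w i g := sum_nonneg fun g _ => hw i g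
  rcases hEFL i j with hcard | ⟨g, hg, hg_single, hg_erase⟩
  · have hmu := mu2_union_le_of_card_le_one (sum_mono_set_of_nonneg (hw i)) (X i) (X j) hcard
    linarith
  · have hXj : ∑ x ∈ X j, w i x = w i g + ∑ x ∈ (X j).erase g, w i x :=
      (add_sum_erase _ _ hg).symm
    rw [sum_singleton] at hg_single
    linarith [mu2_le_half_sum (w i) (X i ∪ X j), sum_union_le_sum_add_sum (hw i) (X i) (X j)]

theorem EFL_implies_two_thirds_PMMS
    {G : Type*} [DecidableEq G] {n : ℕ}
    (w : Fin n → G → ℝ) (hw : ∀ i g, 0 ≤ w i g)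
    (V : Fin n → Finset G → ℝ) (hV : ∀ i S, V i S = ∑ g ∈ S, w i g)
    (X : Fin n → Finset G)
    (hdisj : ∀ i j : Fin n, i ≠ j → Disjoint (X i) (X j))
    (hEFL : ∀ i j : Fin n, (X j).card ≤ 1 ∨
      ∃ g ∈ X j, V i {g} ≤ V i (X i) ∧ V i ((X j).erase g) ≤ V i (X i)) :
    ∀ i j : Fin n, (2 / 3 : ℝ) * mu2 (V i) (X i ∪ X j) ≤ V i (X i) :=
  EFL_implies_two_thirds_PMMS_general w hw V hV X hEFL
end

section
/- Let X be a partition of goods, let agent i have a monotone valuation, let X_p be an EFX-best bundle for i in X, and form partition X' from X by moving x_p^i (a good of X_p whose removal leaves the largest remaining value for i) from X_p to another bundle X_r. Then agent i does not EFX-envy any bundle of X' other than X_r ∪ {x_p^i} relative to X_p \ {x_p^i}, and whichever of X_p \ {x_p^i} and X_r ∪ {x_p^i} agent i values more is EFX-feasible for i in X'. -/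
open Finset

/-- Bundle `Y b` is EFX-feasible for valuation `v` in partition `Y`. -/
def EFXfeasibleIn {G : Type*} [DecidableEq G] {k : ℕ}
    (v : Finset G → ℝ) (Y : Fin k → Finset G) (b : Fin k) : Prop :=
  ∀ m, ∀ g ∈ Y m, v ((Y m).erase g) ≤ v (Y b)

/-!
Removing any good from any bundle of `X` leaves at most `v (X p \ {x p})`, since `x ℓ` is the
best good to remove from `X ℓ` and `X p` is EFX-best; removing a good from `X p \ {x p}` itself
leaves less by monotonicity. Hence only `X r ∪ {x p}` can be EFX-envied relative to
`X p \ {x p}`, and whichever of the two modified bundles is worth more dominates all the others.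
-/

section

variable {G : Type*} [DecidableEq G] {k : ℕ} {v : Finset G → ℝ}

theorem erase_le_of_efxBest {X : Fin k → Finset G} {x : Fin k → G}
    (hx : ∀ ℓ, ∀ g ∈ X ℓ, v ((X ℓ).erase g) ≤ v ((X ℓ).erase (x ℓ))) {p : Fin k}
    (hbest : ∀ ℓ, X ℓ = ∅ ∨ v ((X ℓ).erase (x ℓ)) ≤ v ((X p).erase (x p)))
    {ℓ : Fin k} {g : G} (hg : g ∈ X ℓ) :
    v ((X ℓ).erase g) ≤ v ((X p).erase (x p)) := by
  rcases hbest ℓ with hempty | hle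
  · simp [hempty] at hg
  · exact (hx ℓ g hg).trans hle

theorem efxFeasibleIn_of_forall_ne (hv : Monotone v) {Y : Fin k → Finset G} {b r : Fin k}
    (hne : ∀ m, m ≠ r → ∀ g ∈ Y m, v ((Y m).erase g) ≤ v (Y b)) (hr : v (Y r) ≤ v (Y b)) :
    EFXfeasibleIn v Y b := by
  intro m g hg
  by_cases hmr : m = r
  · subst hmr
    exact (hv (erase_subset g _)).trans hr
  · exact hne m hmr g hg

end

theorem move_min_good_from_efx_best_general
    {G : Type*} [DecidableEq G] {k : ℕ}
    (v : Finset G → ℝ) (hmono : ∀ A B : Finset G, A ⊆ B → v A ≤ v B)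
    (X : Fin k → Finset G)
    (x : Fin k → G)
    (hx : ∀ ℓ, (X ℓ).Nonempty →
      x ℓ ∈ X ℓ ∧ ∀ g ∈ X ℓ, v ((X ℓ).erase g) ≤ v ((X ℓ).erase (x ℓ)))
    (p r : Fin k)
    (hbest : ∀ ℓ, X ℓ = ∅ ∨ v ((X ℓ).erase (x ℓ)) ≤ v ((X p).erase (x p)))
    (X' : Fin k → Finset G)
    (hX' : X' = fun m => if m = p then (X p).erase (x p)
      else if m = r then insert (x p) (X r) else X m) :
    (∀ m, m ≠ r → ∀ g ∈ X' m, v ((X' m).erase g) ≤ v ((X p).erase (x p))) ∧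
    (v (X' r) ≤ v (X' p) → EFXfeasibleIn v X' p) ∧
    (v (X' p) ≤ v (X' r) → EFXfeasibleIn v X' r) := by
  have hv : Monotone v := fun A B h => hmono A B h
  have hX'p : X' p = (X p).erase (x p) := by simp [hX']
  have hother : ∀ m, m ≠ r → ∀ g ∈ X' m, v ((X' m).erase g) ≤ v (X' p) := by
    intro m hmr g hg
    by_cases hmp : m = p
    · subst hmp
      exact hv (erase_subset g _)
    · have hX'm : X' m = X m := by simp [hX', hmp, hmr]
      rw [hX'm] at hg
      rw [hX'm, hX'p]
      exact erase_le_of_efxBest (fun ℓ g hg => (hx ℓ ⟨g, hg⟩).2 g hg) hbest hg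
  exact ⟨hX'p ▸ hother, efxFeasibleIn_of_forall_ne hv hother,
    fun h => efxFeasibleIn_of_forall_ne hv (fun m hm g hg => (hother m hm g hg).trans h) le_rfl⟩

theorem move_min_good_from_efx_best
    {G : Type*} [DecidableEq G] {k : ℕ}
    (v : Finset G → ℝ) (hmono : ∀ A B : Finset G, A ⊆ B → v A ≤ v B)
    (X : Fin k → Finset G)
    (hdisj : ∀ i j : Fin k, i ≠ j → Disjoint (X i) (X j))
    (x : Fin k → G)
    (hx : ∀ ℓ, (X ℓ).Nonempty →
      x ℓ ∈ X ℓ ∧ ∀ g ∈ X ℓ, v ((X ℓ).erase g) ≤ v ((X ℓ).erase (x ℓ)))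
    (p r : Fin k) (hpr : p ≠ r) (hp : (X p).Nonempty)
    (hbest : ∀ ℓ, X ℓ = ∅ ∨ v ((X ℓ).erase (x ℓ)) ≤ v ((X p).erase (x p)))
    (X' : Fin k → Finset G)
    (hX' : X' = fun m => if m = p then (X p).erase (x p)
      else if m = r then insert (x p) (X r) else X m) :
    (∀ m, m ≠ r → ∀ g ∈ X' m, v ((X' m).erase g) ≤ v ((X p).erase (x p))) ∧
    (v (X' r) ≤ v (X' p) → EFXfeasibleIn v X' p) ∧
    (v (X' p) ≤ v (X' r) → EFXfeasibleIn v X' r) :=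
  move_min_good_from_efx_best_general v hmono X x hx p r hbest X' hX'
end

section
/- Let X be a partition, i an agent with a monotone valuation, X_ℓ a bundle that is EFL-feasible for i in X, and X_p, X_r bundles with v_i(X_ℓ) ≥ v_i(X_r) and |X_p| ≥ 2, where p ≠ ℓ. If partition X' is obtained from X by removing some good g from X_p and adding it to X_r, then X_ℓ is still EFL-feasible for i in X'. -/
/-!
EFL-feasibility of `X ℓ` says that no bundle is EFL-envied relative to the value of `X ℓ`. This
property of a single bundle is stable under shrinking the bundle (for monotone valuations), and a
bundle `insert g S` is never EFL-envied when both `{g}` and `S` are worth at most `X ℓ`. Since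
`|X p| ≥ 2`, feasibility already bounds `v {g}`, and `X ℓ` can only grow, so every bundle of the
new partition stays unenvied.
-/

open Finset

/-- Bundle `X b` is EFL-feasible for valuation `v` in partition `X`. -/
def EFLfeasibleIn {G : Type*} [DecidableEq G] {k : ℕ}
    (v : Finset G → ℝ) (X : Fin k → Finset G) (b : Fin k) : Prop :=
  ∀ m, (X m).card ≤ 1 ∨ ∃ g ∈ X m, v {g} ≤ v (X b) ∧ v ((X m).erase g) ≤ v (X b)

/-- The negation of EFL-envy of `S` relative to a bundle of value `t`. -/
def NoEFLEnvy {G β : Type*} [DecidableEq G] [Preorder β]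
    (v : Finset G → β) (t : β) (S : Finset G) : Prop :=
  S.card ≤ 1 ∨ ∃ g ∈ S, v {g} ≤ t ∧ v (S.erase g) ≤ t

section NoEFLEnvy

variable {G β : Type*} [DecidableEq G] [Preorder β] {v : Finset G → β} {t t' : β}
  {S T : Finset G} {g : G}

theorem eflFeasibleIn_iff {k : ℕ} {v : Finset G → ℝ} {X : Fin k → Finset G} {b : Fin k} :
    EFLfeasibleIn v X b ↔ ∀ m, NoEFLEnvy v (v (X b)) (X m) :=
  Iff.rfl

theorem NoEFLEnvy.mono_value (h : NoEFLEnvy v t S) (ht : t ≤ t') : NoEFLEnvy v t' S := by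
  rcases h with hcard | ⟨g, hg, hsingle, herase⟩
  · exact Or.inl hcard
  · exact Or.inr ⟨g, hg, hsingle.trans ht, herase.trans ht⟩

/-- If the witness `g` of `S` is missing from `T`, then `T ⊆ S.erase g`, so every good of `T`
serves as a witness for `T`. -/
theorem NoEFLEnvy.subset (hv : Monotone v) (h : NoEFLEnvy v t S) (hTS : T ⊆ S) :
    NoEFLEnvy v t T := by
  rcases h with hcard | ⟨g, hg, hsingle, herase⟩
  · exact Or.inl ((card_le_card hTS).trans hcard)
  by_cases hgT : g ∈ T
  · exact Or.inr ⟨g, hgT, hsingle, (hv (erase_subset_erase g hTS)).trans herase⟩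
  rcases T.eq_empty_or_nonempty with rfl | ⟨h, hhT⟩
  · exact Or.inl (by simp)
  have hT : v T ≤ t :=
    (hv fun x hx => mem_erase.2 ⟨ne_of_mem_of_not_mem hx hgT, hTS hx⟩).trans herase
  exact Or.inr
    ⟨h, hhT, (hv (singleton_subset_iff.2 hhT)).trans hT, (hv (erase_subset h T)).trans hT⟩

theorem NoEFLEnvy.singleton_le (hv : Monotone v) (h : NoEFLEnvy v t S) (hS : 2 ≤ S.card)
    (hg : g ∈ S) : v {g} ≤ t := by
  rcases h with hcard | ⟨g', -, hsingle, herase⟩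
  · omega
  by_cases hgg' : g = g'
  · exact hgg' ▸ hsingle
  · exact (hv (singleton_subset_iff.2 (mem_erase.2 ⟨hgg', hg⟩))).trans herase

theorem noEFLEnvy_insert (hv : Monotone v) (hg : v {g} ≤ t) (hS : v S ≤ t) :
    NoEFLEnvy v t (insert g S) :=
  Or.inr ⟨g, mem_insert_self g S, hg, (hv (erase_insert_subset g S)).trans hS⟩

end NoEFLEnvy

theorem efl_feasible_preserved_by_moving_good_general
    {G : Type*} [DecidableEq G] {k : ℕ}
    (v : Finset G → ℝ) (hmono : ∀ A B : Finset G, A ⊆ B → v A ≤ v B)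
    (X : Fin k → Finset G)
    (ℓ p r : Fin k) (hpl : p ≠ ℓ)
    (hefl : EFLfeasibleIn v X ℓ)
    (hval : v (X r) ≤ v (X ℓ)) (hcard : 2 ≤ (X p).card)
    (g : G) (hg : g ∈ X p)
    (X' : Fin k → Finset G)
    (hX' : X' = fun m => if m = p then (X p).erase g
      else if m = r then insert g (X r) else X m) :
    EFLfeasibleIn v X' ℓ := by
  have hv : Monotone v := fun A B => hmono A B
  rw [eflFeasibleIn_iff] at hefl ⊢
  have hgℓ : v {g} ≤ v (X ℓ) := (hefl p).singleton_le hv hcard hg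
  have hX'ℓ : X ℓ ⊆ X' ℓ := by
    simp only [hX', if_neg hpl.symm]
    split_ifs with hℓr
    · exact hℓr ▸ subset_insert g (X r)
    · exact subset_refl _
  suffices h : ∀ m, NoEFLEnvy v (v (X ℓ)) (X' m) from fun m => (h m).mono_value (hv hX'ℓ)
  intro m
  subst hX'
  dsimp only
  split_ifs
  · exact (hefl p).subset hv (erase_subset g (X p))
  · exact noEFLEnvy_insert hv hgℓ hval
  · exact hefl m

theorem efl_feasible_preserved_by_moving_good
    {G : Type*} [DecidableEq G] {k : ℕ}
    (v : Finset G → ℝ) (hmono : ∀ A B : Finset G, A ⊆ B → v A ≤ v B)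
    (X : Fin k → Finset G)
    (hdisj : ∀ i j : Fin k, i ≠ j → Disjoint (X i) (X j))
    (ℓ p r : Fin k) (hpl : p ≠ ℓ) (hprr : p ≠ r)
    (hefl : EFLfeasibleIn v X ℓ)
    (hval : v (X r) ≤ v (X ℓ)) (hcard : 2 ≤ (X p).card)
    (g : G) (hg : g ∈ X p)
    (X' : Fin k → Finset G)
    (hX' : X' = fun m => if m = p then (X p).erase g
      else if m = r then insert g (X r) else X m) :
    EFLfeasibleIn v X' ℓ :=
  efl_feasible_preserved_by_moving_good_general v hmono X ℓ p r hpl hefl hval hcard g hg X' hX'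
end

section
/- Let X_p and X_r be disjoint bundles, let i and j be two agents with restricted MMS-feasible valuations, and let x_p^i, x_p^j ∈ X_p be goods minimizing the marginal loss for i and j respectively (x_p^u ∈ argmax_{g∈X_p} v_u(X_p \ {g})), chosen to coincide if a common minimizer exists. If for some agent u ∈ {i, j}, v_u(X_p \ x_p^u) ≤ v_u(X_r ∪ {x_p^u}), then for the other agent's good x_p^h (h ∈ {i,j}\{u}) we have v_u(X_p \ x_p^h) ≤ v_u(X_p \ x_p^u) ≤ v_u(X_r ∪ {x_p^h}). -/
/-!
Moving a good `x` from `X_p` to `X_r` turns `(X_p, X_r)` into the 2-partition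
`(X_p \ x, X_r ∪ x)` of `X_p ∪ X_r`. Restricted MMS-feasibility, applied to the partitions
obtained from `x_p^u` and `x_p^h`, bounds the smaller value of the first by the larger value
of the second. If `v_u(X_p \ x_p^u) ≤ v_u(X_p \ x_p^h)`, then `x_p^h` would also minimize the
marginal loss for `u`, hence be a common minimizer, and `x_p^h = x_p^u`; otherwise the bound
falls on `X_r ∪ x_p^h`.
-/

open Finset

/-- A valuation is restricted MMS-feasible if for any bundle `S`, any `k`, and any two
partitions of `S` into `k` bundles, the max bundle value of the first partition is at
least the min bundle value of the second. -/
def RMMSFeasible {G : Type*} [DecidableEq G] (v : Finset G → ℝ) : Prop :=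
  ∀ (S : Finset G) (k : ℕ) (hk : 0 < k) (X Z : Fin k → Finset G),
    IsPartitionOn S X → IsPartitionOn S Z →
    Finset.univ.inf' ⟨⟨0, hk⟩, mem_univ _⟩ (fun ℓ => v (Z ℓ)) ≤
      Finset.univ.sup' ⟨⟨0, hk⟩, mem_univ _⟩ (fun ℓ => v (X ℓ))

section

variable {G : Type*} [DecidableEq G]

theorem Finset.disjoint_erase_insert_of_disjoint {s t : Finset G} (h : Disjoint s t) (a : G) :
    Disjoint (s.erase a) (insert a t) :=
  disjoint_insert_right.2 ⟨notMem_erase a s, h.mono_left (erase_subset a s)⟩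

theorem Finset.erase_union_insert {s : Finset G} {a : G} (ha : a ∈ s) (t : Finset G) :
    s.erase a ∪ insert a t = s ∪ t := by
  rw [erase_union_of_mem (mem_insert_self a t), union_insert,
    insert_eq_of_mem (mem_union_left t ha)]

theorem isPartitionOn_pair {A B : Finset G} (h : Disjoint A B) :
    IsPartitionOn (A ∪ B) ![A, B] := by
  refine ⟨fun i j hij => ?_, ?_⟩
  · fin_cases i <;> fin_cases j <;> simp_all [h.symm]
  · ext x
    simp [Fin.exists_fin_two]

namespace RMMSFeasible

variable {v : Finset G → ℝ}

theorem min_le_max (hv : RMMSFeasible v) {A B C D : Finset G} (hAB : Disjoint A B)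
    (hCD : Disjoint C D) (hS : A ∪ B = C ∪ D) :
    min (v A) (v B) ≤ max (v C) (v D) := by
  have := hv (C ∪ D) 2 two_pos ![C, D] ![A, B] (isPartitionOn_pair hCD)
    (hS ▸ isPartitionOn_pair hAB)
  simpa [Fin.univ_succ, sup'_insert, inf'_insert] using this

theorem le_erase_or_le_insert_of_le_insert (hv : RMMSFeasible v) {Xp Xr : Finset G}
    (hdisj : Disjoint Xp Xr) {a b : G} (ha : a ∈ Xp) (hb : b ∈ Xp)
    (h : v (Xp.erase a) ≤ v (insert a Xr)) :
    v (Xp.erase a) ≤ v (Xp.erase b) ∨ v (Xp.erase a) ≤ v (insert b Xr) := by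
  have := hv.min_le_max (disjoint_erase_insert_of_disjoint hdisj a) (disjoint_erase_insert_of_disjoint hdisj b)
    ((erase_union_insert ha Xr).trans (erase_union_insert hb Xr).symm)
  rw [min_eq_left h] at this
  exact le_max_iff.1 this

theorem erase_le_and_le_insert_of_le_insert (hv : RMMSFeasible v) {Xp Xr : Finset G}
    (hdisj : Disjoint Xp Xr) {a b : G} (ha : a ∈ Xp) (hb : b ∈ Xp)
    (hmax : ∀ g ∈ Xp, v (Xp.erase g) ≤ v (Xp.erase a))
    (hcommon : (∀ g ∈ Xp, v (Xp.erase g) ≤ v (Xp.erase b)) → a = b)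
    (h : v (Xp.erase a) ≤ v (insert a Xr)) :
    v (Xp.erase b) ≤ v (Xp.erase a) ∧ v (Xp.erase a) ≤ v (insert b Xr) := by
  refine ⟨hmax b hb, ?_⟩
  rcases hv.le_erase_or_le_insert_of_le_insert hdisj ha hb h with hab | hab
  · obtain rfl := hcommon fun g hg => (hmax g hg).trans hab
    exact h
  · exact hab

end RMMSFeasible

end

theorem findmins_lemma
    {G : Type*} [DecidableEq G]
    (vi vj : Finset G → ℝ) (hi : RMMSFeasible vi) (hj : RMMSFeasible vj)
    (Xp Xr : Finset G) (hdisj : Disjoint Xp Xr)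
    (xpi xpj : G) (hxi : xpi ∈ Xp) (hxj : xpj ∈ Xp)
    (hmini : ∀ g ∈ Xp, vi (Xp.erase g) ≤ vi (Xp.erase xpi))
    (hminj : ∀ g ∈ Xp, vj (Xp.erase g) ≤ vj (Xp.erase xpj))
    (hcommon : (∃ g ∈ Xp, (∀ g' ∈ Xp, vi (Xp.erase g') ≤ vi (Xp.erase g)) ∧
        (∀ g' ∈ Xp, vj (Xp.erase g') ≤ vj (Xp.erase g))) → xpi = xpj) :
    (vi (Xp.erase xpi) ≤ vi (insert xpi Xr) →
      vi (Xp.erase xpj) ≤ vi (Xp.erase xpi) ∧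
        vi (Xp.erase xpi) ≤ vi (insert xpj Xr)) ∧
    (vj (Xp.erase xpj) ≤ vj (insert xpj Xr) →
      vj (Xp.erase xpi) ≤ vj (Xp.erase xpj) ∧
        vj (Xp.erase xpj) ≤ vj (insert xpi Xr)) :=
  ⟨hi.erase_le_and_le_insert_of_le_insert hdisj hxi hxj hmini
      fun hxj_max => hcommon ⟨xpj, hxj, hxj_max, hminj⟩,
    hj.erase_le_and_le_insert_of_le_insert hdisj hxj hxi hminj
      fun hxi_max => (hcommon ⟨xpi, hxi, hmini, hxi_max⟩).symm⟩
end

section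
/- Let X and Z be two partitions of all goods with the same number of bundles, let agent i have a monotone restricted MMS-feasible valuation, let Z_a ∈ Z, and let Y' ⊆ X ∩ Z be a set of bundles occurring in both partitions such that i does not EFX-envy any bundle of Y' relative to Z_a. Let Y = X \ Y'. If Z_a is not EEFX-feasible for i in Z, then the bundle of Y most valuable to i, Best_i(Y), is EFX-feasible for i in X and satisfies v_i(Best_i(Y)) ≥ v_i(Z_a). -/
open Finset

/-!
If some bundle of `X` outside `Y'` is worth at least `v (Z a)`, the most valuable such bundle is
EFX-feasible: removing a good from a shared bundle leaves at most `v (Z a)`, and from any other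
bundle at most its own value. So assume every remaining bundle is worth less than `Z a`. Comparing
with `X`, restricted MMS-feasibility says that every repartition of the remaining goods into as
many bundles has a bundle worth less than `Z a`. A local search, moving a good from a bundle that
is still worth more than `v (Z a)` without it into a bundle worth less than `v (Z a)`, then ends in
a repartition in which no bundle minus a good is worth more than `v (Z a)`. If `Z a` is not shared,
its goods are all remaining goods and it can be kept as one of the new bundles. Adding the shared
bundles back exhibits `Z a` as EEFX-feasible, a contradiction.
-/

open Function

def fibersOn {G ι : Type*} [DecidableEq ι] (R : Finset G) (σ : G → ι) (i : ι) : Finset G :=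
  R.filter fun x => σ x = i

@[simp]
theorem mem_fibersOn {G ι : Type*} [DecidableEq ι] {R : Finset G} {σ : G → ι} {i : ι} {x : G} :
    x ∈ fibersOn R σ i ↔ x ∈ R ∧ σ x = i :=
  mem_filter

section
variable {G : Type*} [DecidableEq G] {k n r : ℕ} {v : Finset G → ℝ}

namespace IsPartitionOn
variable {S : Finset G} {X Z : Fin k → Finset G}

theorem subset (hX : IsPartitionOn S X) (i : Fin k) : X i ⊆ S :=
  hX.2 ▸ subset_biUnion_of_mem X (mem_univ i)

theorem exists_mem (hX : IsPartitionOn S X) {x : G} (hx : x ∈ S) : ∃ i, x ∈ X i := by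
  rw [← hX.2] at hx
  simpa using hx

theorem eq_of_mem (hX : IsPartitionOn S X) {x : G} {i j : Fin k} (hi : x ∈ X i)
    (hj : x ∈ X j) : i = j := by
  by_contra h
  exact disjoint_left.1 (hX.1 i j h) hi hj

theorem cons {B : Finset G} {Q : Fin r → Finset G} (hQ : IsPartitionOn (S \ B) Q) (hB : B ⊆ S) :
    IsPartitionOn S (Fin.cons B Q : Fin (r + 1) → Finset G) := by
  have hBQ (j : Fin r) : Disjoint B (Q j) := disjoint_sdiff.mono_right (hQ.subset j)
  refine ⟨fun i j hij => ?_, ?_⟩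
  · cases i using Fin.cases <;> cases j using Fin.cases
    · exact absurd rfl hij
    · simpa using hBQ _
    · simpa using (hBQ _).symm
    · simpa using hQ.1 _ _ fun h => hij (by rw [h])
  · ext x
    have hx : (∃ j, x ∈ Q j) ↔ x ∈ S \ B := by simp [← hQ.2]
    simp only [mem_biUnion, mem_univ, true_and, Fin.exists_fin_succ, Fin.cons_zero,
      Fin.cons_succ, hx, mem_sdiff]
    constructor
    · rintro (h | h)
      exacts [hB h, h.1]
    · tauto

theorem comp_equiv (hX : IsPartitionOn S X) (T : Finset (Fin k)) (e : Fin n ≃ T) :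
    IsPartitionOn (T.biUnion X) fun j => X (e j) := by
  refine ⟨fun i j hij => hX.1 _ _ fun h => hij (e.injective (Subtype.ext h)), ?_⟩
  ext x
  simp only [mem_biUnion, mem_univ, true_and]
  constructor
  · rintro ⟨j, hj⟩
    exact ⟨_, (e j).2, hj⟩
  · rintro ⟨ℓ, hℓ, hx⟩
    exact ⟨e.symm ⟨ℓ, hℓ⟩, by simpa using hx⟩

theorem range_eq_of_range_subset (hX : IsPartitionOn S X) (hZ : IsPartitionOn S Z)
    (h : Set.range X ⊆ Set.range Z) : Set.range X = Set.range Z := by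
  refine h.antisymm ?_
  rintro _ ⟨a, rfl⟩
  choose f hf using fun ℓ => h ⟨ℓ, rfl⟩
  rcases (Z a).eq_empty_or_nonempty with ha | ⟨x, hx⟩
  · -- unless `X` has an empty bundle, `f` is injective, hence onto
    by_contra hne
    have hinj : Injective f := fun l₁ l₂ h₁₂ => by
      by_contra hl
      have hX₁ : X l₁ = ∅ := by
        rw [← disjoint_self_iff_empty]
        simpa [← hf l₁, ← hf l₂, h₁₂] using hX.1 l₁ l₂ hl
      exact hne ⟨l₁, hX₁.trans ha.symm⟩
    obtain ⟨ℓ, rfl⟩ := Finite.surjective_of_injective hinj a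
    exact hne ⟨ℓ, (hf ℓ).symm⟩
  · obtain ⟨ℓ, hxℓ⟩ := hX.exists_mem (hZ.subset a hx)
    rw [← hf ℓ] at hxℓ
    exact ⟨ℓ, (hf ℓ).symm.trans (by rw [hZ.eq_of_mem hxℓ hx])⟩

theorem subset_biUnion_of_notMem (hX : IsPartitionOn S X) (hZ : IsPartitionOn S Z)
    {Y' : Finset (Finset G)} (hY' : ∀ B ∈ Y', ∃ ℓ, Z ℓ = B) {a : Fin k} (ha : Z a ∉ Y') :
    Z a ⊆ (univ.filter fun ℓ => X ℓ ∉ Y').biUnion X := by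
  intro x hx
  obtain ⟨ℓ, hxℓ⟩ := hX.exists_mem (hZ.subset a hx)
  refine mem_biUnion.2 ⟨ℓ, mem_filter.2 ⟨mem_univ _, fun hℓ => ha ?_⟩, hxℓ⟩
  obtain ⟨ℓ', hℓ'⟩ := hY' _ hℓ
  rw [← hℓ'] at hℓ hxℓ
  rwa [← hZ.eq_of_mem hxℓ hx]

end IsPartitionOn

section fibersOn
variable {ι : Type*} [DecidableEq ι] {R : Finset G}

theorem fibersOn_update_self (σ : G → ι) {g : G} (hg : g ∈ R) (i : ι) :
    fibersOn R (update σ g i) i = insert g (fibersOn R σ i) := by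
  ext x
  by_cases hx : x = g <;> simp [hx, hg]

theorem fibersOn_update_of_ne (σ : G → ι) (g : G) {i l : ι} (hl : l ≠ i) :
    fibersOn R (update σ g i) l = (fibersOn R σ l).erase g := by
  ext x
  by_cases hx : x = g <;> simp [hx, Ne.symm hl]

end fibersOn

theorem isPartitionOn_fibersOn (R : Finset G) (σ : G → Fin k) :
    IsPartitionOn R (fibersOn R σ) := by
  refine ⟨fun i j hij => disjoint_left.2 fun x hi hj => hij ?_, ?_⟩
  · exact (mem_fibersOn.1 hi).2.symm.trans (mem_fibersOn.1 hj).2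
  · ext x
    simp

theorem IsPartitionOn.exists_eq_fibersOn [NeZero k] {R : Finset G} {X : Fin k → Finset G}
    (hX : IsPartitionOn R X) : ∃ σ : G → Fin k, X = fibersOn R σ := by
  classical
  refine ⟨fun x => if h : ∃ i, x ∈ X i then h.choose else 0, funext fun i => ?_⟩
  ext x
  rw [mem_fibersOn]
  constructor
  · intro hx
    have h : ∃ i, x ∈ X i := ⟨i, hx⟩
    rw [dif_pos h]
    exact ⟨hX.subset i hx, hX.eq_of_mem h.choose_spec hx⟩
  · rintro ⟨hx, rfl⟩
    have h := hX.exists_mem hx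
    rw [dif_pos h]
    exact h.choose_spec

theorem IsPartitionOn.exists_replace [NeZero k] [NeZero n] {S : Finset G} {X : Fin k → Finset G}
    (hX : IsPartitionOn S X) (T : Finset (Fin k)) (e : Fin n ≃ T) {P : Fin n → Finset G}
    (hP : IsPartitionOn (T.biUnion X) P) :
    ∃ W : Fin k → Finset G, IsPartitionOn S W ∧ (∀ ℓ ∉ T, W ℓ = X ℓ) ∧ ∀ j, W (e j) = P j := by
  obtain ⟨α, rfl⟩ := hX.exists_eq_fibersOn
  obtain ⟨π, rfl⟩ := hP.exists_eq_fibersOn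
  refine ⟨fibersOn S fun x => if α x ∈ T then e (π x) else α x, isPartitionOn_fibersOn _ _,
    fun ℓ hℓ => ?_, fun j => ?_⟩
  · ext x
    by_cases hx : α x ∈ T
    · have h₁ : (e (π x) : Fin k) ≠ ℓ := fun h => hℓ (h ▸ (e _).2)
      have h₂ : α x ≠ ℓ := fun h => hℓ (h ▸ hx)
      simp [hx, h₁, h₂]
    · simp [hx]
  · ext x
    by_cases hx : α x ∈ T
    · simp [hx]
    · have h : α x ≠ e j := fun h => hx (h ▸ (e j).2)
      simp [hx, h]

theorem exists_isPartitionOn_erase_le [Fintype G] [NeZero r] (hmono : Monotone v)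
    {R : Finset G} {c : ℝ} (H : ∀ Q : Fin r → Finset G, IsPartitionOn R Q → ∃ j, v (Q j) < c) :
    ∃ Q : Fin r → Finset G, IsPartitionOn R Q ∧ ∀ j, ∀ g ∈ Q j, v ((Q j).erase g) ≤ c := by
  -- Moving a good from a bundle that stays above `c` into a bundle below `c` increases this weight.
  let w : Finset G → ℕ := fun B => if v B < c then #B else Fintype.card G + 1
  have hw_le (B : Finset G) : w B ≤ Fintype.card G + 1 := by
    unfold w; split_ifs <;> linarith [card_le_univ B]
  have hw_insert {B : Finset G} {g : G} (hg : g ∉ B) (hB : v B < c) : w B < w (insert g B) := by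
    unfold w; split_ifs <;> simp_all [card_insert_of_notMem hg, Nat.lt_succ_of_le (card_le_univ B)]
  obtain ⟨σ, -, hσ⟩ := (univ : Finset (G → Fin r)).exists_max_image
    (fun σ => ∑ i, w (fibersOn R σ i)) univ_nonempty
  refine ⟨_, isPartitionOn_fibersOn R σ, ?_⟩
  by_contra! ⟨j, g, hg, hgj⟩
  obtain ⟨hgR, rfl⟩ := mem_fibersOn.1 hg
  obtain ⟨i, hi⟩ := H _ (isPartitionOn_fibersOn R σ)
  have hij : i ≠ σ g := by
    rintro rfl
    exact (hi.trans (hgj.trans_le (hmono (erase_subset _ _)))).false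
  have hgi : g ∉ fibersOn R σ i := fun h => hij (mem_fibersOn.1 h).2.symm
  refine (hσ (update σ g i) (mem_univ _)).not_gt
    (sum_lt_sum (fun l _ => ?_) ⟨i, mem_univ _, ?_⟩)
  · rcases eq_or_ne l i with rfl | hli
    · rw [fibersOn_update_self σ hgR]
      exact (hw_insert hgi hi).le
    rw [fibersOn_update_of_ne σ g hli]
    rcases eq_or_ne l (σ g) with rfl | hlg
    · simp only [w, if_neg hgj.not_gt]
      exact hw_le _
    · rw [erase_eq_of_notMem fun h => hlg (mem_fibersOn.1 h).2.symm]
  · rw [fibersOn_update_self σ hgR]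
    exact hw_insert hgi hi

theorem exists_isPartitionOn_cons_erase_le [Fintype G] (hmono : Monotone v) {S B : Finset G}
    (hB : B ⊆ S) (H : ∀ Q : Fin (r + 1) → Finset G, IsPartitionOn S Q → ∃ j, v (Q j) < v B) :
    ∃ Q : Fin (r + 1) → Finset G, IsPartitionOn S Q ∧ Q 0 = B ∧
      ∀ j, ∀ g ∈ Q j, v ((Q j).erase g) ≤ v B := by
  rcases r with _ | r
  · have hS : IsPartitionOn S fun _ : Fin 1 => S :=
      ⟨fun i j h => absurd (Subsingleton.elim i j) h, by simp⟩
    obtain ⟨-, hS⟩ := H _ hS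
    exact absurd (hmono hB) hS.not_ge
  obtain ⟨Q, hQ, hQB⟩ := exists_isPartitionOn_erase_le hmono (R := S \ B) fun Q hQ => by
    obtain ⟨j, hj⟩ := H _ (hQ.cons hB)
    cases j using Fin.cases with
    | zero => exact absurd hj (lt_irrefl _)
    | succ j => exact ⟨j, hj⟩
  refine ⟨_, hQ.cons hB, rfl, fun j => ?_⟩
  cases j using Fin.cases with
  | zero => exact fun g _ => hmono (erase_subset g B)
  | succ j => simpa using hQB j

theorem RMMSFeasible.exists_lt_of_forall_lt (hv : RMMSFeasible v) [NeZero n] {S : Finset G}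
    {X Q : Fin n → Finset G} (hX : IsPartitionOn S X) (hQ : IsPartitionOn S Q) {c : ℝ}
    (hlow : ∀ j, v (X j) < c) : ∃ j, v (Q j) < c := by
  obtain ⟨j, -, hj⟩ := (inf'_lt_iff _).1 <|
    (hv S n (NeZero.pos n) X Q hX hQ).trans_lt ((sup'_lt_iff _).2 fun j _ => hlow j)
  exact ⟨j, hj⟩

def EEFXFeasible (k : ℕ) (v : Finset G → ℝ) (S B : Finset G) : Prop :=
  ∃ W : Fin k → Finset G, IsPartitionOn S W ∧ ∃ b, W b = B ∧ EFXfeasibleIn v W b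

section EEFX
variable {S : Finset G} {X Z : Fin k → Finset G} {Y' : Finset (Finset G)}

theorem eefxFeasible_of_erase_le {B : Finset G} {W : Fin k → Finset G} (hW : IsPartitionOn S W)
    {b : Fin k} (hb : W b = B) (hbdd : ∀ ℓ, ∀ g ∈ W ℓ, v ((W ℓ).erase g) ≤ v B) :
    EEFXFeasible k v S B :=
  ⟨W, hW, b, hb, fun ℓ g hg => hb ▸ hbdd ℓ g hg⟩

theorem eefxFeasible_of_forall_mem (hX : IsPartitionOn S X) (hZ : IsPartitionOn S Z) (a : Fin k)
    (hY' : ∀ B ∈ Y', ∃ ℓ, Z ℓ = B) (hnoenvy : ∀ B ∈ Y', ∀ g ∈ B, v (B.erase g) ≤ v (Z a))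
    (hXY' : ∀ ℓ, X ℓ ∈ Y') : EEFXFeasible k v S (Z a) := by
  obtain ⟨b, hb⟩ : Z a ∈ Set.range X := by
    rw [hX.range_eq_of_range_subset hZ (Set.range_subset_iff.2 fun ℓ => hY' _ (hXY' ℓ))]
    exact ⟨a, rfl⟩
  exact eefxFeasible_of_erase_le hX hb fun ℓ => hnoenvy _ (hXY' ℓ)

theorem eefxFeasible_of_forall_lt [Fintype G] (hmono : Monotone v) (hrmf : RMMSFeasible v)
    (hX : IsPartitionOn S X) (hZ : IsPartitionOn S Z) (a : Fin k)
    (hY' : ∀ B ∈ Y', (∃ ℓ, X ℓ = B) ∧ (∃ ℓ, Z ℓ = B))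
    (hnoenvy : ∀ B ∈ Y', ∀ g ∈ B, v (B.erase g) ≤ v (Z a))
    (hlow : ∀ ℓ, X ℓ ∉ Y' → v (X ℓ) < v (Z a)) : EEFXFeasible k v S (Z a) := by
  set T := univ.filter fun ℓ => X ℓ ∉ Y'
  have hT {ℓ : Fin k} : ℓ ∈ T ↔ X ℓ ∉ Y' := by simp [T]
  rcases hn : #T with _ | r
  · refine eefxFeasible_of_forall_mem hX hZ a (fun B hB => (hY' B hB).2) hnoenvy fun ℓ => ?_
    by_contra h
    simpa [hn] using card_pos.2 ⟨ℓ, hT.2 h⟩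
  have : NeZero k := NeZero.of_pos a.pos
  let e : Fin (r + 1) ≃ T := (T.equivFinOfCardEq hn).symm
  have hsmall (Q : Fin (r + 1) → Finset G) (hQ : IsPartitionOn (T.biUnion X) Q) :
      ∃ j, v (Q j) < v (Z a) :=
    hrmf.exists_lt_of_forall_lt (hX.comp_equiv T e) hQ fun j => hlow _ (hT.1 (e j).2)
  obtain ⟨P, hP, hPZ, hPbdd⟩ : ∃ P : Fin (r + 1) → Finset G, IsPartitionOn (T.biUnion X) P ∧
      (Z a ∈ Y' ∨ ∃ j, P j = Z a) ∧ ∀ j, ∀ g ∈ P j, v ((P j).erase g) ≤ v (Z a) := by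
    by_cases ha : Z a ∈ Y'
    · obtain ⟨P, hP, hPbdd⟩ := exists_isPartitionOn_erase_le hmono hsmall
      exact ⟨P, hP, .inl ha, hPbdd⟩
    · obtain ⟨P, hP, hP0, hPbdd⟩ := exists_isPartitionOn_cons_erase_le hmono
        (hX.subset_biUnion_of_notMem hZ (fun B hB => (hY' B hB).2) ha) hsmall
      exact ⟨P, hP, .inr ⟨0, hP0⟩, hPbdd⟩
  obtain ⟨W, hW, hWX, hWP⟩ := hX.exists_replace T e hP
  obtain ⟨b, hb⟩ : ∃ b, W b = Z a := by
    rcases hPZ with ha | ⟨j, hj⟩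
    · obtain ⟨b, hb⟩ := (hY' _ ha).1
      exact ⟨b, (hWX b fun h => hT.1 h (hb ▸ ha)).trans hb⟩
    · exact ⟨e j, (hWP j).trans hj⟩
  refine eefxFeasible_of_erase_le hW hb fun ℓ g hg => ?_
  by_cases hℓ : ℓ ∈ T
  · obtain ⟨j, hj⟩ := e.surjective ⟨ℓ, hℓ⟩
    obtain rfl : (e j : Fin k) = ℓ := congrArg Subtype.val hj
    rw [hWP j] at hg ⊢
    exact hPbdd j g hg
  · rw [hWX ℓ hℓ] at hg ⊢
    exact hnoenvy _ (not_not.1 (mt hT.2 hℓ)) g hg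

end EEFX
end

theorem best_remaining_bundle_is_efx_feasible
    {G : Type*} [DecidableEq G] [Fintype G] {k : ℕ}
    (v : Finset G → ℝ) (hmono : ∀ A B : Finset G, A ⊆ B → v A ≤ v B)
    (hrmf : RMMSFeasible v)
    (X Z : Fin k → Finset G)
    (hX : IsPartitionOn Finset.univ X) (hZ : IsPartitionOn Finset.univ Z)
    (a : Fin k)
    (Y' : Finset (Finset G))
    (hY' : ∀ B ∈ Y', (∃ ℓ, X ℓ = B) ∧ (∃ ℓ, Z ℓ = B))
    (hnoenvy : ∀ B ∈ Y', ∀ g ∈ B, v (B.erase g) ≤ v (Z a))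
    (hnotEEFX : ¬ ∃ W : Fin k → Finset G, IsPartitionOn Finset.univ W ∧
        ∃ b, W b = Z a ∧ EFXfeasibleIn v W b) :
    ∃ m : Fin k, X m ∉ Y' ∧ (∀ ℓ, X ℓ ∉ Y' → v (X ℓ) ≤ v (X m)) ∧
      EFXfeasibleIn v X m ∧ v (Z a) ≤ v (X m) := by
  obtain ⟨ℓ₀, hℓ₀, hZℓ₀⟩ : ∃ ℓ, X ℓ ∉ Y' ∧ v (Z a) ≤ v (X ℓ) := by
    by_contra! hlow
    exact hnotEEFX <|
      eefxFeasible_of_forall_lt (fun _ _ => hmono _ _) hrmf hX hZ a hY' hnoenvy hlow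
  obtain ⟨m, hm, hmax⟩ := (univ.filter fun ℓ => X ℓ ∉ Y').exists_max_image (fun ℓ => v (X ℓ))
    ⟨ℓ₀, by simpa using hℓ₀⟩
  have hmax' (ℓ : Fin k) (hℓ : X ℓ ∉ Y') : v (X ℓ) ≤ v (X m) := hmax ℓ (by simpa using hℓ)
  have hZm : v (Z a) ≤ v (X m) := hZℓ₀.trans (hmax' ℓ₀ hℓ₀)
  refine ⟨m, by simpa using hm, hmax', fun ℓ g hg => ?_, hZm⟩
  by_cases hℓ : X ℓ ∈ Y'
  · exact (hnoenvy _ hℓ g hg).trans hZm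
  · exact (hmono _ _ (erase_subset g _)).trans (hmax' ℓ hℓ)
end

section
/- The envy-cycle elimination procedure terminates: repeatedly rotating associations along any directed cycle of the generalized envy graph (each agent in the cycle takes the bundle she envies) must stop after finitely many rotations, because each rotation strictly increases some associated agent's value and never decreases any associated agent's value, while the number of possible assignments of bundles to agents is finite. -/
open Finset

/-- Edge of the generalized envy graph: bundle `a` is associated with an agent who
values bundle `b` strictly more than `a`. -/
def EnvyEdge {G : Type*} {k n : ℕ} (v : Fin n → Finset G → ℝ)
    (X : Fin k → Finset G) (f : Fin k → Option (Fin n)) (a b : Fin k) : Prop :=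
  ∃ i, f a = some i ∧ v i (X a) < v i (X b)

/-- `f'` is obtained from `f` by eliminating (rotating along) one directed cycle of
the generalized envy graph `G(X, f)`: each agent on the cycle takes the bundle she
envies, other associations are unchanged. -/
def IsCycleRotation {G : Type*} {k n : ℕ} (v : Fin n → Finset G → ℝ)
    (X : Fin k → Finset G) (f f' : Fin k → Option (Fin n)) : Prop :=
  ∃ (c : List (Fin k)) (hc : c ≠ []),
    c.Nodup ∧
    c.Chain' (EnvyEdge v X f) ∧
    EnvyEdge v X f (c.getLast hc) (c.head hc) ∧
    (∀ m, m ∉ c → f' m = f m) ∧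
    (∀ (i : ℕ) (hi : i + 1 < c.length),
      f' (c.get ⟨i + 1, hi⟩) = f (c.get ⟨i, Nat.lt_of_succ_lt hi⟩)) ∧
    f' (c.head hc) = f (c.getLast hc)

/-!
Measure an association by its welfare: the sum, over associated bundles, of the value the
associated agent gives her bundle. Eliminating a cycle hands every agent on it a bundle she
strictly prefers to her old one and leaves all other associations alone, so welfare strictly
increases. An infinite run of eliminations would thus visit infinitely many distinct
associations, but there are only finitely many.
-/

theorem Fin.sum_lt_sum_of_lt_cyclic_succ {M : Type*} [AddCommMonoid M] [PartialOrder M]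
    [IsOrderedCancelAddMonoid M] {L : ℕ} {u w : Fin (L + 1) → M}
    (hlast : u (Fin.last L) < w 0) (hsucc : ∀ i : Fin L, u i.castSucc < w i.succ) :
    ∑ j, u j < ∑ j, w j := by
  rw [Fin.sum_univ_castSucc, Fin.sum_univ_succ, add_comm]
  exact add_lt_add_of_lt_of_le hlast (sum_le_sum fun i _ => (hsucc i).le)

section Welfare

variable {G : Type*} {k n : ℕ} (v : Fin n → Finset G → ℝ) (X : Fin k → Finset G)

noncomputable def bundleValue (f : Fin k → Option (Fin n)) (a : Fin k) : ℝ :=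
  (f a).elim 0 fun i => v i (X a)

noncomputable def welfare (f : Fin k → Option (Fin n)) : ℝ :=
  ∑ a, bundleValue v X f a

variable {v X}

theorem EnvyEdge.bundleValue_lt {f f' : Fin k → Option (Fin n)} {a b : Fin k}
    (h : EnvyEdge v X f a b) (hb : f' b = f a) :
    bundleValue v X f a < bundleValue v X f' b := by
  obtain ⟨i, hi, hlt⟩ := h
  simpa [bundleValue, hb, hi] using hlt

theorem welfare_eq_sum_map_add_sum_compl (f : Fin k → Option (Fin n)) {c : List (Fin k)}
    (hc : c.Nodup) :
    welfare v X f =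
      (c.map (bundleValue v X f)).sum + ∑ a ∈ c.toFinsetᶜ, bundleValue v X f a := by
  rw [← List.sum_toFinset _ hc, sum_add_sum_compl]
  rfl

theorem IsCycleRotation.welfare_lt {f f' : Fin k → Option (Fin n)}
    (h : IsCycleRotation v X f f') : welfare v X f < welfare v X f' := by
  obtain ⟨c, hc, hnd, hchain, hclose, hout, hstep, hhead⟩ := h
  have hcycle : (c.map (bundleValue v X f)).sum < (c.map (bundleValue v X f')).sum := by
    obtain ⟨a, l, rfl⟩ := List.exists_cons_of_ne_nil hc
    rw [← Fin.sum_univ_fun_getElem, ← Fin.sum_univ_fun_getElem]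
    refine Fin.sum_lt_sum_of_lt_cyclic_succ (L := l.length) ?_ fun i => ?_
    · simpa [List.getLast_eq_getElem] using hclose.bundleValue_lt hhead
    · exact (List.isChain_iff_getElem.1 hchain i.1 (by simp)).bundleValue_lt
        (hstep i.1 (by simp))
  have hrest :
      ∑ a ∈ c.toFinsetᶜ, bundleValue v X f a = ∑ a ∈ c.toFinsetᶜ, bundleValue v X f' a :=
    sum_congr rfl fun a ha => by simp [bundleValue, hout a (by simpa using ha)]
  rw [welfare_eq_sum_map_add_sum_compl f hnd, welfare_eq_sum_map_add_sum_compl f' hnd, hrest]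
  exact add_lt_add_left hcycle _

end Welfare

/-- The envy-cycle elimination procedure terminates: there is no infinite sequence of
association functions in which each is obtained from the previous one by eliminating a
cycle of the generalized envy graph. -/
theorem cycle_elimination_terminates
    {G : Type*} {k n : ℕ} (v : Fin n → Finset G → ℝ) (X : Fin k → Finset G) :
    ¬ ∃ F : ℕ → (Fin k → Option (Fin n)),
        ∀ t, IsCycleRotation v X (F t) (F (t + 1)) := by
  rintro ⟨F, hF⟩
  have hmono : StrictMono (welfare v X ∘ F) :=
    strictMono_nat_of_lt_succ fun t => (hF t).welfare_lt
  exact not_injective_infinite_finite F hmono.injective.of_comp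
end

section
/- After eliminating an envy cycle in the generalized envy graph, if the association function f was MXS+EFL for the partition X before the rotation, it remains MXS+EFL after, and the sets D(f) of associated bundle indices and I(f) of associated agents are unchanged. -/
open Finset

/-- Bundle `X b` is k-MXS-feasible for valuation `v` in a partition `X` of all goods. -/
def MXSfeasibleIn {G : Type*} [DecidableEq G] [Fintype G] {k : ℕ}
    (v : Finset G → ℝ) (X : Fin k → Finset G) (b : Fin k) : Prop :=
  ∃ Y : Fin k → Finset G, IsPartitionOn Finset.univ Y ∧
    EFXfeasibleIn v Y b ∧ v (Y b) ≤ v (X b)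

/-- `f` is an MXS+EFL association function for `X`: every associated bundle is
MXS-feasible and EFL-feasible for its associated agent. -/
def IsMXSEFL {G : Type*} [DecidableEq G] [Fintype G] {k n : ℕ}
    (v : Fin n → Finset G → ℝ) (X : Fin k → Finset G)
    (f : Fin k → Option (Fin n)) : Prop :=
  ∀ ℓ a, f ℓ = some a → MXSfeasibleIn (v a) X ℓ ∧ EFLfeasibleIn (v a) X ℓ

/-! Eliminating the cycle `c` reassociates along the cyclic permutation `σ = c.formPerm`:
`f' ∘ σ = f`, and `σ` moves only associated bundles, each along an envy edge. Hence the associated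
agents and bundles are the same sets as before, and every agent's new bundle is worth at least her
old one to her. Both feasibility notions are upward closed in the value of the bundle: for EFL this
is immediate, and an MXS witness partition for the old bundle serves for the new one once its two
indices are swapped. -/

theorem List.IsChain.rel_formPerm {α : Type*} [DecidableEq α] {R : α → α → Prop}
    {l : List α} (hl : l.Nodup) (hne : l ≠ []) (hchain : l.IsChain R)
    (hcycle : R (l.getLast hne) (l.head hne)) {x : α} (hx : x ∈ l) :
    R x (l.formPerm x) := by
  obtain ⟨i, hi, rfl⟩ := List.getElem_of_mem hx
  by_cases hnext : i + 1 < l.length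
  · rw [List.formPerm_apply_lt_getElem l hl i hnext]
    exact hchain.getElem i hnext
  · obtain ⟨y, ys, rfl⟩ := List.exists_cons_of_ne_nil hne
    have hlast : (y :: ys)[i] = (y :: ys).getLast hne := by
      rw [List.getLast_eq_getElem]
      congr 1
      simp only [List.length_cons] at hi hnext ⊢
      omega
    simpa [hlast] using hcycle

section Feasibility

variable {G : Type*} [DecidableEq G] {k : ℕ}

theorem IsPartitionOn.comp_perm {S : Finset G} {Y : Fin k → Finset G}
    (hY : IsPartitionOn S Y) (σ : Equiv.Perm (Fin k)) : IsPartitionOn S (Y ∘ σ) := by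
  obtain ⟨hdisj, hunion⟩ := hY
  refine ⟨fun i j hij => hdisj _ _ (σ.injective.ne hij), ?_⟩
  rw [← hunion]
  ext g
  simp only [Finset.mem_biUnion, Finset.mem_univ, true_and, Function.comp_apply]
  exact ⟨fun ⟨i, hi⟩ => ⟨σ i, hi⟩, fun ⟨i, hi⟩ => ⟨σ.symm i, by simpa using hi⟩⟩

theorem EFXfeasibleIn.comp_perm {v : Finset G → ℝ} {Y : Fin k → Finset G} {b : Fin k}
    (σ : Equiv.Perm (Fin k)) (h : EFXfeasibleIn v Y (σ b)) :
    EFXfeasibleIn v (Y ∘ σ) b :=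
  fun m => h (σ m)

theorem EFLfeasibleIn.of_le {v : Finset G → ℝ} {X : Fin k → Finset G} {b b' : Fin k}
    (h : EFLfeasibleIn v X b) (hle : v (X b) ≤ v (X b')) : EFLfeasibleIn v X b' := fun m =>
  (h m).imp_right fun ⟨g, hg, hsingle, herase⟩ => ⟨g, hg, hsingle.trans hle, herase.trans hle⟩

variable [Fintype G]

theorem MXSfeasibleIn.of_le {v : Finset G → ℝ} {X : Fin k → Finset G} {b b' : Fin k}
    (h : MXSfeasibleIn v X b) (hle : v (X b) ≤ v (X b')) : MXSfeasibleIn v X b' := by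
  obtain ⟨Y, hY, hefx, hval⟩ := h
  have hswap : Equiv.swap b' b b' = b := Equiv.swap_apply_left b' b
  refine ⟨Y ∘ Equiv.swap b' b, hY.comp_perm _, .comp_perm _ (by rwa [hswap]), ?_⟩
  simpa only [Function.comp_apply, hswap] using hval.trans hle

end Feasibility

section Reassociation

variable {α β : Type*} {σ : Equiv.Perm α} {f f' : α → Option β}

theorem exists_eq_some_iff_of_comp_perm (h : f' ∘ σ = f) (a : β) :
    (∃ ℓ, f' ℓ = some a) ↔ ∃ ℓ, f ℓ = some a := by
  subst h
  exact ⟨fun ⟨ℓ, hℓ⟩ => ⟨σ.symm ℓ, by simpa using hℓ⟩, fun ⟨ℓ, hℓ⟩ => ⟨σ ℓ, hℓ⟩⟩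

theorem eq_none_iff_of_comp_perm (h : f' ∘ σ = f)
    (hmoved : ∀ ℓ, σ ℓ ≠ ℓ → f ℓ ≠ none) (ℓ : α) : f' ℓ = none ↔ f ℓ = none := by
  by_cases hfix : σ ℓ = ℓ
  · rw [← h, Function.comp_apply, hfix]
  · have hsymm : σ (σ.symm ℓ) ≠ σ.symm ℓ := by
      rw [σ.apply_symm_apply]
      exact fun hℓ => hfix (σ.symm_apply_eq.1 hℓ.symm).symm
    have hpre : f' ℓ = f (σ.symm ℓ) := by rw [← h, Function.comp_apply, σ.apply_symm_apply]
    rw [hpre]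
    exact iff_of_false (hmoved _ hsymm) (hmoved ℓ hfix)

end Reassociation

section Rotation

variable {G : Type*} {k n : ℕ} {v : Fin n → Finset G → ℝ} {X : Fin k → Finset G}
  {f f' : Fin k → Option (Fin n)}

theorem EnvyEdge.le {ℓ m : Fin k} {a : Fin n} (h : EnvyEdge v X f ℓ m) (ha : f ℓ = some a) :
    v a (X ℓ) ≤ v a (X m) := by
  obtain ⟨b, hb, hlt⟩ := h
  obtain rfl : a = b := Option.some_injective _ (ha.symm.trans hb)
  exact hlt.le

theorem IsCycleRotation.exists_perm (hrot : IsCycleRotation v X f f') :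
    ∃ σ : Equiv.Perm (Fin k), f' ∘ σ = f ∧ ∀ ℓ, σ ℓ ≠ ℓ → EnvyEdge v X f ℓ (σ ℓ) := by
  obtain ⟨c, hne, hnodup, hchain, hcycle, hoff, hstep, hhead⟩ := hrot
  have hrel : c.IsChain fun ℓ m => EnvyEdge v X f ℓ m ∧ f' m = f ℓ :=
    List.isChain_iff_getElem.2 fun i hi => ⟨hchain.getElem i hi, by simpa using hstep i hi⟩
  have hon (ℓ) (hℓ : ℓ ∈ c) := hrel.rel_formPerm hnodup hne ⟨hcycle, hhead⟩ hℓ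
  refine ⟨c.formPerm, funext fun ℓ => ?_,
    fun ℓ hmoved => (hon ℓ (List.mem_of_formPerm_apply_ne hmoved)).1⟩
  by_cases hℓ : ℓ ∈ c
  · exact (hon ℓ hℓ).2
  · rw [Function.comp_apply, List.formPerm_apply_of_notMem hℓ, hoff ℓ hℓ]

theorem IsMXSEFL.of_comp_perm [DecidableEq G] [Fintype G] {σ : Equiv.Perm (Fin k)}
    (hfair : IsMXSEFL v X f) (h : f' ∘ σ = f)
    (hle : ∀ ℓ a, f ℓ = some a → v a (X ℓ) ≤ v a (X (σ ℓ))) : IsMXSEFL v X f' := by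
  intro ℓ a ha
  have ha' : f (σ.symm ℓ) = some a := by rwa [← h, Function.comp_apply, σ.apply_symm_apply]
  have hval := σ.apply_symm_apply ℓ ▸ hle _ a ha'
  exact ⟨(hfair _ a ha').1.of_le hval, (hfair _ a ha').2.of_le hval⟩

end Rotation

theorem cycle_elimination_preserves_mxs_efl_general
    {G : Type*} [DecidableEq G] [Fintype G] {k n : ℕ}
    (v : Fin n → Finset G → ℝ)
    (X : Fin k → Finset G)
    (f f' : Fin k → Option (Fin n))
    (hrot : IsCycleRotation v X f f')
    (hfair : IsMXSEFL v X f) :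
    IsMXSEFL v X f' ∧
    {ℓ : Fin k | f' ℓ ≠ none} = {ℓ : Fin k | f ℓ ≠ none} ∧
    {a : Fin n | ∃ ℓ, f' ℓ = some a} = {a : Fin n | ∃ ℓ, f ℓ = some a} := by
  obtain ⟨σ, hσ, henvy⟩ := hrot.exists_perm
  have hle (ℓ a) (ha : f ℓ = some a) : v a (X ℓ) ≤ v a (X (σ ℓ)) := by
    by_cases hfix : σ ℓ = ℓ
    · rw [hfix]
    · exact (henvy ℓ hfix).le ha
  have hmoved (ℓ) (hℓ : σ ℓ ≠ ℓ) : f ℓ ≠ none := by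
    obtain ⟨b, hb, -⟩ := henvy ℓ hℓ
    simp [hb]
  exact ⟨hfair.of_comp_perm hσ hle, Set.ext fun ℓ => (eq_none_iff_of_comp_perm hσ hmoved ℓ).not,
    Set.ext (exists_eq_some_iff_of_comp_perm hσ)⟩

theorem cycle_elimination_preserves_mxs_efl
    {G : Type*} [DecidableEq G] [Fintype G] {k n : ℕ}
    (v : Fin n → Finset G → ℝ)
    (hmono : ∀ a, ∀ A B : Finset G, A ⊆ B → v a A ≤ v a B)
    (X : Fin k → Finset G) (hX : IsPartitionOn Finset.univ X)
    (f f' : Fin k → Option (Fin n))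
    (hinj : ∀ ℓ z a, f ℓ = some a → f z = some a → ℓ = z)
    (hrot : IsCycleRotation v X f f')
    (hfair : IsMXSEFL v X f) :
    IsMXSEFL v X f' ∧
    {ℓ : Fin k | f' ℓ ≠ none} = {ℓ : Fin k | f ℓ ≠ none} ∧
    {a : Fin n | ∃ ℓ, f' ℓ = some a} = {a : Fin n | ∃ ℓ, f ℓ = some a} :=
  cycle_elimination_preserves_mxs_efl_general v X f f' hrot hfair
end
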